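/- Let v be a nonnegative monotone submodular set function on a finite ground set G with v(∅) = 0 and multilinear extension V, let x ∈ [0,1]^G and c > 0. Let j_1, …, j_k be distinct elements of G chosen greedily, i.e., for each t, j_t maximizes V(x^{(L_{t−1})} + 1_j) − V(x^{(L_{t−1})}) over all j ∈ G ∖ L_{t−1}, where L_t = {j_1, …, j_t} and L_0 = ∅. If ∑_{t=1}^{k} x_{j_t} ≥ c, then for every j ∈ G ∖ L_k, V(x^{(L_k)} + 1_j) − V(x^{(L_k)}) ≤ V(x^{(L_k)})/c. -/

import Mathlib

/-!
The multilinear extension `V` is affine in each coordinate `x_j`, with slope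
`∂_j V(x) = 𝔼[v(R ∪ {j}) - v(R)]`, `R` the random set drawn from `x` off `j`; this slope
is also the marginal `V(x + 1_j) - V(x)`, and submodularity makes it antitone in `x`.
For `j ∉ L_k` and `D = ∂_j V(x^{(L_k)})` the greedy choice thus gives
`D ≤ ∂_j V(x^{(L_{t-1})}) ≤ ∂_{j_t} V(x^{(L_{t-1})})`, so adding `j_t` raises `V` by at
least `x_{j_t} D`. Telescoping, `V(x^{(L_k)}) ≥ v(∅) + c D` if `D > 0`; if `D ≤ 0` there
is nothing to prove since `V ≥ 0`.
-/

open Finset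

/-- A set function `v` on a finite ground set is submodular if
`v(S ∩ T) + v(S ∪ T) ≤ v(S) + v(T)` for all `S, T`. -/
def Submodular {G : Type*} [DecidableEq G] (v : Finset G → ℝ) : Prop :=
  ∀ S T : Finset G, v (S ∩ T) + v (S ∪ T) ≤ v S + v T

/-- The multilinear extension of a set function `v` on a finite ground set `G`. -/
noncomputable def multilinear {G : Type*} [Fintype G] [DecidableEq G]
    (v : Finset G → ℝ) (x : G → ℝ) : ℝ :=
  ∑ S : Finset G, v S * ((∏ j ∈ S, x j) * ∏ j ∈ Sᶜ, (1 - x j))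

/-- The indicator vector of a finite set `S`. -/
def indVec {G : Type*} [DecidableEq G] (S : Finset G) : G → ℝ :=
  fun j => if j ∈ S then 1 else 0

/-- `x^{(S)}`: the vector equal to `x` on coordinates in `S` and `0` elsewhere. -/
def restr {G : Type*} [DecidableEq G] (x : G → ℝ) (S : Finset G) : G → ℝ :=
  fun j => if j ∈ S then x j else 0

section

variable {G : Type*} [DecidableEq G]

noncomputable def multilinearOn (A : Finset G) (f : Finset G → ℝ) (x : G → ℝ) : ℝ :=
  ∑ S ∈ A.powerset, f S * ((∏ i ∈ S, x i) * ∏ i ∈ A \ S, (1 - x i))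

namespace multilinearOn

variable {A : Finset G} {f g : Finset G → ℝ} {x y : G → ℝ}

theorem congr_right (h : ∀ i ∈ A, x i = y i) : multilinearOn A f x = multilinearOn A f y := by
  refine sum_congr rfl fun S hS => ?_
  have hSA := mem_powerset.mp hS
  rw [prod_congr rfl fun i hi => h i (hSA hi),
    prod_congr rfl fun i hi => congrArg (1 - ·) (h i (mem_sdiff.mp hi).1)]

theorem mono (hfg : ∀ S, f S ≤ g S) (hx0 : 0 ≤ x) (hx1 : x ≤ 1) :
    multilinearOn A f x ≤ multilinearOn A g x :=
  sum_le_sum fun S _ => mul_le_mul_of_nonneg_right (hfg S) <| mul_nonneg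
    (prod_nonneg fun i _ => hx0 i) (prod_nonneg fun i _ => sub_nonneg.mpr (hx1 i))

theorem nonneg (hf : ∀ S, 0 ≤ f S) (hx0 : 0 ≤ x) (hx1 : x ≤ 1) :
    0 ≤ multilinearOn A f x := by
  simpa [multilinearOn] using mono (A := A) (f := 0) hf hx0 hx1

theorem sub_fun (A : Finset G) (f g : Finset G → ℝ) (x : G → ℝ) :
    multilinearOn A (fun S => f S - g S) x = multilinearOn A f x - multilinearOn A g x := by
  simp only [multilinearOn, sub_mul, sum_sub_distrib]

theorem insert_eq {i : G} (hi : i ∉ A) (f : Finset G → ℝ) (x : G → ℝ) :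
    multilinearOn (insert i A) f x
      = (1 - x i) * multilinearOn A f x + x i * multilinearOn A (fun S => f (insert i S)) x := by
  rw [multilinearOn, sum_powerset_insert hi, multilinearOn, multilinearOn, mul_sum, mul_sum]
  congr 1 <;> refine sum_congr rfl fun S hS => ?_
  · have hiS : i ∉ S := fun h => hi (mem_powerset.mp hS h)
    rw [insert_sdiff_of_notMem _ hiS, prod_insert fun h => hi (mem_sdiff.mp h).1]
    ring
  · have hiS : i ∉ S := fun h => hi (mem_powerset.mp hS h)
    rw [insert_sdiff_insert, sdiff_insert_of_notMem hi, prod_insert hiS]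
    ring

theorem antitone (hf : ∀ i ∈ A, ∀ S, f (insert i S) ≤ f S)
    (hx0 : 0 ≤ x) (hxy : x ≤ y) (hy1 : y ≤ 1) :
    multilinearOn A f y ≤ multilinearOn A f x := by
  induction A using Finset.induction_on generalizing f with
  | empty => simp [multilinearOn]
  | @insert i A hi ih =>
    have hfA : ∀ a ∈ A, ∀ S, f (insert a S) ≤ f S := fun a ha => hf a (mem_insert_of_mem ha)
    have hfiA : ∀ a ∈ A, ∀ S, f (insert i (insert a S)) ≤ f (insert i S) := fun a ha S => by
      simpa only [Finset.insert_comm] using hfA a ha (insert i S)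
    have hdrop : multilinearOn A (fun S => f (insert i S)) x ≤ multilinearOn A f x :=
      mono (hf i (mem_insert_self i A)) hx0 (hxy.trans hy1)
    have hyi : 0 ≤ 1 - y i := sub_nonneg.mpr (hy1 i)
    rw [insert_eq hi, insert_eq hi]
    calc (1 - y i) * multilinearOn A f y + y i * multilinearOn A (fun S => f (insert i S)) y
        ≤ (1 - y i) * multilinearOn A f x + y i * multilinearOn A (fun S => f (insert i S)) x :=
          add_le_add (mul_le_mul_of_nonneg_left (ih hfA) hyi)
            (mul_le_mul_of_nonneg_left (ih hfiA) ((hx0 i).trans (hxy i)))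
      _ ≤ (1 - x i) * multilinearOn A f x
            + x i * multilinearOn A (fun S => f (insert i S)) x := by
          linarith [mul_le_mul_of_nonneg_left hdrop (sub_nonneg.mpr (hxy i))]

end multilinearOn

theorem Submodular.diminishing_returns {v : Finset G → ℝ} (hsub : Submodular v) {i j : G}
    (hij : i ≠ j) (S : Finset G) :
    v (insert j (insert i S)) - v (insert i S) ≤ v (insert j S) - v S := by
  by_cases hjS : j ∈ S
  · simp [hjS]
  by_cases hiS : i ∈ S
  · simp [hiS]
  have hinter : insert i S ∩ insert j S = S := by
    ext a; simp only [mem_inter, mem_insert]; grind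
  have hunion : insert i S ∪ insert j S = insert j (insert i S) := by
    ext a; simp only [mem_union, mem_insert]; tauto
  have := hsub (insert i S) (insert j S)
  rw [hinter, hunion] at this
  linarith

section Fintype

variable [Fintype G]

theorem multilinear_eq_multilinearOn_univ (v : Finset G → ℝ) (x : G → ℝ) :
    multilinear v x = multilinearOn univ v x := by
  simp only [multilinear, multilinearOn, powerset_univ, compl_eq_univ_sdiff]

theorem multilinear_nonneg {v : Finset G → ℝ} (hv : ∀ S, 0 ≤ v S) {x : G → ℝ}
    (hx0 : 0 ≤ x) (hx1 : x ≤ 1) : 0 ≤ multilinear v x :=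
  multilinear_eq_multilinearOn_univ v x ▸ multilinearOn.nonneg hv hx0 hx1

theorem multilinear_zero (v : Finset G → ℝ) : multilinear v 0 = v ∅ := by
  rw [multilinear, sum_eq_single ∅]
  · simp
  · intro S _ hS
    obtain ⟨a, ha⟩ := nonempty_iff_ne_empty.mpr hS
    simp [prod_eq_zero ha]
  · simp

/-- `∂V/∂x_j`; it does not depend on `x j`, so `V` is affine in `x j` with this slope. -/
noncomputable def multilinearPartial (v : Finset G → ℝ) (j : G) (x : G → ℝ) : ℝ :=
  multilinearOn (univ.erase j) (fun S => v (insert j S) - v S) x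

theorem multilinear_eq_add_mul_multilinearPartial (v : Finset G → ℝ) (j : G) (x : G → ℝ) :
    multilinear v x = multilinearOn (univ.erase j) v x + x j * multilinearPartial v j x := by
  rw [multilinear_eq_multilinearOn_univ, ← insert_erase (mem_univ j),
    multilinearOn.insert_eq (notMem_erase j univ), multilinearPartial, insert_erase (mem_univ j),
    multilinearOn.sub_fun]
  ring

theorem multilinear_update (v : Finset G → ℝ) (y : G → ℝ) (j : G) (u : ℝ) :
    multilinear v (Function.update y j u)
      = multilinear v y + (u - y j) * multilinearPartial v j y := by
  have hoff : ∀ i ∈ univ.erase j, Function.update y j u i = y i :=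
    fun i hi => Function.update_of_ne (ne_of_mem_erase hi) _ _
  rw [multilinear_eq_add_mul_multilinearPartial v j,
    multilinear_eq_add_mul_multilinearPartial v j y,
    multilinearPartial, multilinearOn.congr_right hoff, multilinearOn.congr_right hoff,
    Function.update_self, multilinearPartial]
  ring

theorem multilinear_add_indVec_sub (v : Finset G → ℝ) (y : G → ℝ) (j : G) :
    multilinear v (y + indVec {j}) - multilinear v y = multilinearPartial v j y := by
  have : y + indVec {j} = Function.update y j (y j + 1) := by
    ext i
    by_cases h : i = j
    · subst h; simp [indVec]
    · simp [indVec, h]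
  rw [this, multilinear_update]
  ring

theorem multilinearPartial_antitone {v : Finset G → ℝ} (hsub : Submodular v) (j : G)
    {y z : G → ℝ} (hy0 : 0 ≤ y) (hyz : y ≤ z) (hz1 : z ≤ 1) :
    multilinearPartial v j z ≤ multilinearPartial v j y :=
  multilinearOn.antitone (fun _ hi S => hsub.diminishing_returns (ne_of_mem_erase hi) S)
    hy0 hyz hz1

end Fintype

section restr

variable {x : G → ℝ}

theorem restr_nonneg (hx0 : 0 ≤ x) (L : Finset G) : 0 ≤ restr x L := fun a => by
  unfold restr; split_ifs
  exacts [hx0 a, le_rfl]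

theorem restr_le_one (hx1 : x ≤ 1) (L : Finset G) : restr x L ≤ 1 := fun a => by
  unfold restr; split_ifs
  exacts [hx1 a, zero_le_one]

theorem restr_mono (hx0 : 0 ≤ x) {L M : Finset G} (h : L ⊆ M) : restr x L ≤ restr x M :=
  fun a => by
    unfold restr; split_ifs with hL hM hM
    exacts [le_rfl, absurd (h hL) hM, hx0 a, le_rfl]

theorem restr_empty (x : G → ℝ) : restr x ∅ = 0 := by
  ext a; simp [restr]

theorem restr_insert (x : G → ℝ) (L : Finset G) (a : G) :
    restr x (insert a L) = Function.update (restr x L) a (x a) := by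
  ext i
  by_cases h : i = a
  · subst h; simp [restr]
  · simp [restr, h]

theorem multilinear_restr_insert [Fintype G] (v : Finset G → ℝ) (x : G → ℝ) {L : Finset G}
    {a : G} (ha : a ∉ L) :
    multilinear v (restr x (insert a L))
      = multilinear v (restr x L) + x a * multilinearPartial v a (restr x L) := by
  rw [restr_insert, multilinear_update]
  simp [restr, ha]

end restr

section prefixImage

variable {k : ℕ} (j : Fin k → G)

/-- The paper's `L_n = {j_1, …, j_n}`, with the sequence indexed from `0`. -/
def prefixImage (n : ℕ) : Finset G :=
  (univ.filter fun t : Fin k => (t : ℕ) < n).image j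

theorem filter_val_lt_succ {n : ℕ} (hn : n < k) :
    (univ.filter fun t : Fin k => (t : ℕ) < n + 1)
      = insert ⟨n, hn⟩ (univ.filter fun t : Fin k => (t : ℕ) < n) := by
  ext t
  simp only [mem_filter, mem_univ, true_and, mem_insert, Fin.ext_iff]
  omega

theorem filter_val_lt_self : (univ.filter fun t : Fin k => (t : ℕ) < k) = univ :=
  filter_true_of_mem fun t _ => t.isLt

theorem prefixImage_succ {n : ℕ} (hn : n < k) :
    prefixImage j (n + 1) = insert (j ⟨n, hn⟩) (prefixImage j n) := by
  rw [prefixImage, filter_val_lt_succ hn, image_insert, prefixImage]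

theorem prefixImage_self : prefixImage j k = univ.image j := by
  rw [prefixImage, filter_val_lt_self]

theorem prefixImage_subset (n : ℕ) : prefixImage j n ⊆ univ.image j :=
  image_subset_image (filter_subset _ _)

theorem apply_notMem_prefixImage {j : Fin k → G} (hj : Function.Injective j) (t : Fin k) :
    j t ∉ prefixImage j t := by
  simp [prefixImage, hj.eq_iff]

theorem le_multilinear_restr_prefixImage [Fintype G] {v : Finset G → ℝ} {x : G → ℝ}
    (hx0 : 0 ≤ x) {j : Fin k → G} (hj : Function.Injective j) {D : ℝ}
    (hD : ∀ t : Fin k, D ≤ multilinearPartial v (j t) (restr x (prefixImage j t)))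
    {n : ℕ} (hn : n ≤ k) :
    v ∅ + (∑ t ∈ univ.filter fun t : Fin k => (t : ℕ) < n, x (j t)) * D
      ≤ multilinear v (restr x (prefixImage j n)) := by
  induction n with
  | zero => simp [prefixImage, restr_empty, multilinear_zero]
  | succ n ih =>
    have hn' : n < k := hn
    have hgain := mul_le_mul_of_nonneg_left (hD ⟨n, hn'⟩) (hx0 (j ⟨n, hn'⟩))
    rw [filter_val_lt_succ hn', sum_insert (by simp), prefixImage_succ j hn',
      multilinear_restr_insert v x (apply_notMem_prefixImage hj ⟨n, hn'⟩)]
    linarith [ih hn'.le]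

end prefixImage

end

theorem greedy_large_items_bound_general {G : Type*} [Fintype G] [DecidableEq G]
    (v : Finset G → ℝ) (hnn : ∀ S, 0 ≤ v S) (hsub : Submodular v)
    (x : G → ℝ) (hx : ∀ j, 0 ≤ x j ∧ x j ≤ 1) (c : ℝ) (hc : 0 < c)
    (k : ℕ) (j : Fin k → G) (hj : Function.Injective j)
    (hgreedy : ∀ t : Fin k, ∀ j' : G,
      j' ∉ (Finset.univ.filter (fun t' : Fin k => (t' : ℕ) < (t : ℕ))).image j →
      multilinear v (restr x ((Finset.univ.filter (fun t' : Fin k => (t' : ℕ) < (t : ℕ))).image j)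
          + indVec {j'})
        - multilinear v (restr x ((Finset.univ.filter (fun t' : Fin k => (t' : ℕ) < (t : ℕ))).image j))
      ≤ multilinear v (restr x ((Finset.univ.filter (fun t' : Fin k => (t' : ℕ) < (t : ℕ))).image j)
          + indVec {j t})
        - multilinear v (restr x ((Finset.univ.filter (fun t' : Fin k => (t' : ℕ) < (t : ℕ))).image j)))
    (hmass : c ≤ ∑ t : Fin k, x (j t)) :
    ∀ j' : G, j' ∉ (Finset.univ : Finset (Fin k)).image j →
      multilinear v (restr x ((Finset.univ : Finset (Fin k)).image j) + indVec {j'})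
          - multilinear v (restr x ((Finset.univ : Finset (Fin k)).image j))
        ≤ multilinear v (restr x ((Finset.univ : Finset (Fin k)).image j)) / c := by
  intro j' hj'
  have hx0 : 0 ≤ x := fun i => (hx i).1
  have hx1 : x ≤ 1 := fun i => (hx i).2
  rw [multilinear_add_indVec_sub]
  set D := multilinearPartial v j' (restr x (univ.image j))
  have hD : ∀ t : Fin k, D ≤ multilinearPartial v (j t) (restr x (prefixImage j t)) :=
    fun t => by
      have hgreedy_t := hgreedy t j' fun h => hj' (prefixImage_subset j t h)
      rw [multilinear_add_indVec_sub, multilinear_add_indVec_sub] at hgreedy_t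
      exact (multilinearPartial_antitone hsub j' (restr_nonneg hx0 _)
        (restr_mono hx0 (prefixImage_subset j t)) (restr_le_one hx1 _)).trans hgreedy_t
  have hV := le_multilinear_restr_prefixImage hx0 hj hD le_rfl
  rw [filter_val_lt_self, prefixImage_self] at hV
  rcases le_or_gt D 0 with hD0 | hD0
  · exact hD0.trans <| div_nonneg
      (multilinear_nonneg hnn (restr_nonneg hx0 _) (restr_le_one hx1 _)) hc.le
  · rw [le_div_iff₀ hc]
    linarith [hnn ∅, mul_le_mul_of_nonneg_left hmass hD0.le]

/-- the greedy choice of large items guarantees that all remaining items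
have marginal value at most `V(x^{(L)})/c`, provided the selected fractional mass is
at least `c`. Here `L_t` is the image of the first `t` greedily chosen elements. -/
theorem greedy_large_items_bound {G : Type*} [Fintype G] [DecidableEq G]
    (v : Finset G → ℝ) (hnn : ∀ S, 0 ≤ v S) (hmono : Monotone v) (hsub : Submodular v)
    (hempty : v ∅ = 0)
    (x : G → ℝ) (hx : ∀ j, 0 ≤ x j ∧ x j ≤ 1) (c : ℝ) (hc : 0 < c)
    (k : ℕ) (j : Fin k → G) (hj : Function.Injective j)
    (hgreedy : ∀ t : Fin k, ∀ j' : G,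
      j' ∉ (Finset.univ.filter (fun t' : Fin k => (t' : ℕ) < (t : ℕ))).image j →
      multilinear v (restr x ((Finset.univ.filter (fun t' : Fin k => (t' : ℕ) < (t : ℕ))).image j)
          + indVec {j'})
        - multilinear v (restr x ((Finset.univ.filter (fun t' : Fin k => (t' : ℕ) < (t : ℕ))).image j))
      ≤ multilinear v (restr x ((Finset.univ.filter (fun t' : Fin k => (t' : ℕ) < (t : ℕ))).image j)
          + indVec {j t})
        - multilinear v (restr x ((Finset.univ.filter (fun t' : Fin k => (t' : ℕ) < (t : ℕ))).image j)))
    (hmass : c ≤ ∑ t : Fin k, x (j t)) :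
    ∀ j' : G, j' ∉ (Finset.univ : Finset (Fin k)).image j →
      multilinear v (restr x ((Finset.univ : Finset (Fin k)).image j) + indVec {j'})
          - multilinear v (restr x ((Finset.univ : Finset (Fin k)).image j))
        ≤ multilinear v (restr x ((Finset.univ : Finset (Fin k)).image j)) / c :=
  greedy_large_items_bound_general v hnn hsub x hx c hc k j hj hgreedy hmass
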